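/- arXiv:1405.2311 — 6 statements merged into one kernel-verified Lean document; each statement's English description precedes it below -/
import Mathlib

section
/- For any positive integers b, c, the sequence of rational functions (x_m) in Q(x_1,x_2) defined by the exchange relations x_{m+1}x_{m-1} = x_m^b + 1 for m odd and x_{m+1}x_{m-1} = x_m^c + 1 for m even (with x_1, x_2 the generators) satisfies: every x_m is a Laurent polynomial in x_1 and x_2 with integer coefficients. -/
/-!
Work in `R = ℤ[X₀^{±1}, X₁^{±1}] ⊆ ℚ(X₀, X₁)`. If `y₁, y₂, y₃, y₄ ∈ R` satisfy
`y₁ y₃ = y₂^{e'} + 1` and `y₂ y₄ = y₃^e + 1` with `e' > 0`, then modulo `y₂` we have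
`y₁ y₃ ≡ 1` and `y₃^e ≡ -1`, so `y₁^e ≡ -(y₁ y₃)^e ≡ -1`: `y₂` divides `y₁^e + 1`, and the term
`y₀ = (y₁^e + 1) / y₂` preceding them lies in `R` as well. Read in either direction, this lets
four consecutive Laurent terms of the sequence propagate to all of `ℤ`.

Dividing by `y₂` needs `y₂ ≠ 0`. This is certified by evaluating at `X₀ = X₁ = 1`: the
exchange relations keep these values positive.
-/

open MvPolynomial

theorem dvd_pow_add_one_of_exchange {R : Type*} [CommRing R] {y₁ y₂ y₃ y₄ : R} {e e' : ℕ}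
    (he' : e' ≠ 0) (h₂ : y₁ * y₃ = y₂ ^ e' + 1) (h₃ : y₂ * y₄ = y₃ ^ e + 1) :
    y₂ ∣ y₁ ^ e + 1 := by
  have hdvd : y₂ ∣ (y₁ * y₃) ^ e - 1 := by
    have h : y₂ ^ e' = y₁ * y₃ - 1 := by rw [h₂, add_sub_cancel_right]
    have := sub_dvd_pow_sub_pow (y₁ * y₃) 1 e
    rw [← h, one_pow] at this
    exact (dvd_pow_self y₂ he').trans this
  have hexpand : y₁ ^ e + 1 = y₁ ^ e * y₄ * y₂ - ((y₁ * y₃) ^ e - 1) := by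
    linear_combination (-y₁ ^ e) * h₃
  rw [hexpand]
  exact dvd_sub (dvd_mul_left _ _) hdvd

section PosLift

variable {R K 𝕜 : Type*} [CommRing R] [CommRing K] [IsDomain K]
  [Semiring 𝕜] [LinearOrder 𝕜] [IsStrictOrderedRing 𝕜] (f : R →+* K) (ψ : R →+* 𝕜)

def HasPosLift (y : K) : Prop := ∃ r, f r = y ∧ 0 < ψ r

variable {f ψ}

theorem HasPosLift.of_mul_eq_of_dvd (hf : Function.Injective f) {y₀ : K} {r₁ r₂ : R} {e : ℕ}
    (h : y₀ * f r₂ = f r₁ ^ e + 1) (hdvd : r₂ ∣ r₁ ^ e + 1) (hr₁ : 0 ≤ ψ r₁) (hr₂ : 0 < ψ r₂) :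
    HasPosLift f ψ y₀ := by
  obtain ⟨q, hq⟩ := hdvd
  have hfr₂ : f r₂ ≠ 0 :=
    (map_ne_zero_iff f hf).mpr fun h ↦ hr₂.ne' (by rw [h, map_zero])
  refine ⟨q, mul_right_cancel₀ hfr₂ ?_, pos_of_mul_pos_right ?_ hr₂.le⟩
  · rw [h, mul_comm, ← map_mul, ← hq, map_add, map_pow, map_one]
  · rw [← map_mul, ← hq, map_add, map_pow, map_one]
    positivity

theorem HasPosLift.of_exchange (hf : Function.Injective f) {y₀ y₁ y₂ y₃ y₄ : K} {e e' : ℕ}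
    (he' : e' ≠ 0) (h₁ : y₀ * y₂ = y₁ ^ e + 1) (h₂ : y₁ * y₃ = y₂ ^ e' + 1)
    (h₃ : y₂ * y₄ = y₃ ^ e + 1) (hy₁ : HasPosLift f ψ y₁) (hy₂ : HasPosLift f ψ y₂)
    (hy₃ : HasPosLift f ψ y₃) (hy₄ : HasPosLift f ψ y₄) : HasPosLift f ψ y₀ := by
  obtain ⟨r₁, rfl, hr₁⟩ := hy₁
  obtain ⟨r₂, rfl, hr₂⟩ := hy₂
  obtain ⟨r₃, rfl, -⟩ := hy₃
  obtain ⟨r₄, rfl, -⟩ := hy₄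
  simp only [← map_mul, ← map_pow, ← map_one f, ← map_add] at h₂ h₃
  exact .of_mul_eq_of_dvd hf h₁ (dvd_pow_add_one_of_exchange he' (hf h₂) (hf h₃)) hr₁.le hr₂

theorem HasPosLift.of_mul_eq_of_isUnit (hf : Function.Injective f) {y₀ y₁ : K} {u : R} {e : ℕ}
    (h : y₀ * f u = y₁ ^ e + 1) (hu : IsUnit u) (hψu : 0 < ψ u) (hy₁ : HasPosLift f ψ y₁) :
    HasPosLift f ψ y₀ := by
  obtain ⟨r₁, rfl, hr₁⟩ := hy₁
  exact .of_mul_eq_of_dvd hf h hu.dvd hr₁.le hψu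

theorem forall_hasPosLift_of_exchange (hf : Function.Injective f) {e : ℤ → ℕ}
    (he : ∀ m, e (m + 2) = e m) (he₀ : ∀ m, e m ≠ 0) {x : ℤ → K}
    (hx : ∀ m, x m * x (m + 2) = x (m + 1) ^ e (m + 1) + 1) {u₁ u₂ : R}
    (hu₁ : IsUnit u₁) (hu₂ : IsUnit u₂) (hψu₁ : 0 < ψ u₁) (hψu₂ : 0 < ψ u₂)
    (hx₁ : x 1 = f u₁) (hx₂ : x 2 = f u₂) (m : ℤ) : HasPosLift f ψ (x m) := by
  let Q n := HasPosLift f ψ (x n) ∧ HasPosLift f ψ (x (n + 1)) ∧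
    HasPosLift f ψ (x (n + 2)) ∧ HasPosLift f ψ (x (n + 3))
  have hQ₀ : Q 0 := by
    have h₁ : HasPosLift f ψ (x 1) := ⟨u₁, hx₁.symm, hψu₁⟩
    have h₂ : HasPosLift f ψ (x 2) := ⟨u₂, hx₂.symm, hψu₂⟩
    refine ⟨.of_mul_eq_of_isUnit hf (hx₂ ▸ hx 0) hu₂ hψu₂ h₁, h₁, h₂,
      .of_mul_eq_of_isUnit hf (hx₁ ▸ (mul_comm _ _).trans (hx 1)) hu₁ hψu₁ h₂⟩
  have hstep : ∀ n, Q n ↔ Q (n + 1) := by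
    intro n
    have h₀ := hx n
    have h₁ : x (n + 1) * x (n + 3) = x (n + 2) ^ e (n + 2) + 1 := by
      convert hx (n + 1) using 3 <;> ring_nf
    have h₂ : x (n + 2) * x (n + 4) = x (n + 3) ^ e (n + 1) + 1 := by
      rw [← he]; convert hx (n + 2) using 3 <;> ring_nf
    simp only [Q, add_assoc, Int.reduceAdd]
    constructor
    · rintro ⟨q₀, q₁, q₂, q₃⟩
      exact ⟨q₁, q₂, q₃, .of_exchange hf (he₀ (n + 2)) ((mul_comm _ _).trans h₂)
        ((mul_comm _ _).trans h₁) ((mul_comm _ _).trans h₀) q₃ q₂ q₁ q₀⟩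
    · rintro ⟨q₁, q₂, q₃, q₄⟩
      exact ⟨.of_exchange hf (he₀ (n + 2)) h₀ h₁ h₂ q₁ q₂ q₃ q₄, q₁, q₂, q₃⟩
  have hQ : Q m := by
    induction m using Int.induction_on with
    | zero => exact hQ₀
    | succ i ih => exact (hstep i).mp ih
    | pred i ih => exact (hstep _).mpr (by rwa [sub_add_cancel])
  exact hQ.1

end PosLift

local notation "𝕂" => FractionRing (MvPolynomial (Fin 2) ℚ)

noncomputable section

def ratFuncOfIntPoly : MvPolynomial (Fin 2) ℤ →+* 𝕂 :=
  (algebraMap (MvPolynomial (Fin 2) ℚ) 𝕂).comp (map (Int.castRingHom ℚ))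

theorem ratFuncOfIntPoly_injective : Function.Injective ratFuncOfIntPoly :=
  (IsFractionRing.injective (MvPolynomial (Fin 2) ℚ) 𝕂).comp
    (map_injective (Int.castRingHom ℚ) Int.cast_injective)

@[simp]
theorem ratFuncOfIntPoly_X (i : Fin 2) :
    ratFuncOfIntPoly (X i) = algebraMap (MvPolynomial (Fin 2) ℚ) 𝕂 (X i) := by
  simp [ratFuncOfIntPoly]

theorem ratFuncOfIntPoly_mem_closure {s : Set 𝕂}
    (hs : ∀ i, algebraMap (MvPolynomial (Fin 2) ℚ) 𝕂 (X i) ∈ s) (a : MvPolynomial (Fin 2) ℤ) :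
    ratFuncOfIntPoly a ∈ Subring.closure s := by
  induction a using MvPolynomial.induction_on with
  | C n => simp [intCast_mem]
  | add p q hp hq => rw [map_add]; exact add_mem hp hq
  | mul_X p i hp =>
    rw [map_mul, ratFuncOfIntPoly_X]
    exact mul_mem hp (Subring.subset_closure (hs i))

abbrev IntLaurent := Localization.Away (X 0 * X 1 : MvPolynomial (Fin 2) ℤ)

namespace IntLaurent

def toRatFunc : IntLaurent →+* 𝕂 :=
  IsLocalization.Away.lift (X 0 * X 1) (g := ratFuncOfIntPoly) <|
    isUnit_iff_ne_zero.mpr <| (map_ne_zero_iff _ ratFuncOfIntPoly_injective).mpr <|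
      mul_ne_zero (X_ne_zero 0) (X_ne_zero 1)

def evalOne : IntLaurent →+* ℤ :=
  IsLocalization.Away.lift (X 0 * X 1) (g := eval (1 : Fin 2 → ℤ)) (by simp)

theorem toRatFunc_injective : Function.Injective toRatFunc :=
  IsLocalization.injective_of_map_algebraMap_zero
    (M := Submonoid.powers (X 0 * X 1 : MvPolynomial (Fin 2) ℤ)) (S := IntLaurent) toRatFunc
    fun a h ↦ by
      rw [toRatFunc, IsLocalization.Away.lift_eq,
        map_eq_zero_iff _ ratFuncOfIntPoly_injective] at h
      rw [h, map_zero]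

theorem isUnit_X (i : Fin 2) : IsUnit (algebraMap (MvPolynomial (Fin 2) ℤ) IntLaurent (X i)) :=
  IsLocalization.Away.isUnit_of_dvd (X 0 * X 1 : MvPolynomial (Fin 2) ℤ) <| by
    fin_cases i
    exacts [dvd_mul_right _ _, dvd_mul_left _ _]

@[simp]
theorem toRatFunc_algebraMap (a : MvPolynomial (Fin 2) ℤ) :
    toRatFunc (algebraMap _ _ a) = ratFuncOfIntPoly a :=
  IsLocalization.Away.lift_eq _ _ a

@[simp]
theorem evalOne_X (i : Fin 2) : evalOne (algebraMap (MvPolynomial (Fin 2) ℤ) _ (X i)) = 1 := by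
  simp [evalOne]

theorem range_toRatFunc_le : toRatFunc.range ≤ Subring.closure
    {algebraMap (MvPolynomial (Fin 2) ℚ) 𝕂 (X 0), algebraMap (MvPolynomial (Fin 2) ℚ) 𝕂 (X 1),
      (algebraMap (MvPolynomial (Fin 2) ℚ) 𝕂 (X 0))⁻¹,
      (algebraMap (MvPolynomial (Fin 2) ℚ) 𝕂 (X 1))⁻¹} := by
  rintro _ ⟨r, rfl⟩
  obtain ⟨n, a, h⟩ := IsLocalization.Away.surj (X 0 * X 1 : MvPolynomial (Fin 2) ℤ) r
  have hX (i : Fin 2) : algebraMap (MvPolynomial (Fin 2) ℚ) 𝕂 (X i) ≠ 0 :=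
    (map_ne_zero_iff _ (IsFractionRing.injective _ _)).mpr (X_ne_zero i)
  have hr : toRatFunc r = ratFuncOfIntPoly a *
      ((algebraMap (MvPolynomial (Fin 2) ℚ) 𝕂 (X 0))⁻¹ *
        (algebraMap (MvPolynomial (Fin 2) ℚ) 𝕂 (X 1))⁻¹) ^ n := by
    have := congrArg toRatFunc h
    simp only [map_mul, map_pow, toRatFunc_algebraMap, ratFuncOfIntPoly_X] at this
    rw [← this, mul_assoc, ← mul_pow, ← mul_inv, mul_inv_cancel₀ (mul_ne_zero (hX 0) (hX 1)),
      one_pow, mul_one]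
  rw [hr]
  refine mul_mem (ratFuncOfIntPoly_mem_closure (fun i ↦ by fin_cases i <;> simp) a) (pow_mem ?_ n)
  exact mul_mem (Subring.subset_closure (by simp)) (Subring.subset_closure (by simp))

end IntLaurent

end

/-- Laurent phenomenon for rank 2 cluster algebras:
every cluster variable `x m` is a Laurent polynomial in `x 1`, `x 2`
with integer coefficients. -/
theorem laurent_phenomenon_rank2
    (b c : ℕ) (hb : 0 < b) (hc : 0 < c)
    (x : ℤ → FractionRing (MvPolynomial (Fin 2) ℚ))
    (hx1 : x 1 = algebraMap (MvPolynomial (Fin 2) ℚ) _ (MvPolynomial.X 0))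
    (hx2 : x 2 = algebraMap (MvPolynomial (Fin 2) ℚ) _ (MvPolynomial.X 1))
    (hrec : ∀ m : ℤ, x (m + 1) * x (m - 1) =
      if Odd m then x m ^ b + 1 else x m ^ c + 1) :
    ∀ m : ℤ, x m ∈ Subring.closure ({x 1, x 2, (x 1)⁻¹, (x 2)⁻¹} :
      Set (FractionRing (MvPolynomial (Fin 2) ℚ))) := by
  let e : ℤ → ℕ := fun m ↦ if Odd m then b else c
  have he (m : ℤ) : e (m + 2) = e m := by simp [e]
  have he₀ (m : ℤ) : e m ≠ 0 := by dsimp only [e]; split_ifs <;> omega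
  have hx (m : ℤ) : x m * x (m + 2) = x (m + 1) ^ e (m + 1) + 1 := by
    have := hrec (m + 1)
    rw [add_sub_cancel_right, add_assoc, one_add_one_eq_two, mul_comm] at this
    rw [this]; dsimp only [e]; split_ifs <;> rfl
  intro m
  obtain ⟨r, hr, -⟩ := forall_hasPosLift_of_exchange (ψ := IntLaurent.evalOne)
    IntLaurent.toRatFunc_injective he he₀ hx (IntLaurent.isUnit_X 0) (IntLaurent.isUnit_X 1)
    (by simp) (by simp) (by simp [hx1]) (by simp [hx2]) m
  rw [← hr, hx1, hx2]
  exact IntLaurent.range_toRatFunc_le ⟨r, rfl⟩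
end

section
/- For positive integers b, c with bc ≤ 3, the set of cluster variables {x_m : m ∈ Z} of the rank 2 cluster algebra A(b,c) is finite. -/
set_option maxHeartbeats 3000000

open MvPolynomial

private abbrev R2 : Type := MvPolynomial (Fin 2) ℚ
private abbrev K2 : Type := FractionRing R2

private lemma nz2 {P : R2} (h : MvPolynomial.eval (fun _ => (1:ℚ)) P ≠ 0) :
    algebraMap R2 K2 P ≠ 0 := by
  intro hP
  rw [IsFractionRing.to_map_eq_zero_iff] at hP
  exact h (by rw [hP]; simp)

private noncomputable def q2 (N D : R2) : K2 := algebraMap R2 K2 N / algebraMap R2 K2 D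

private lemma q2_ne {N D : R2} (hN : MvPolynomial.eval (fun _ => (1:ℚ)) N ≠ 0)
    (hD : MvPolynomial.eval (fun _ => (1:ℚ)) D ≠ 0) : q2 N D ≠ 0 :=
  div_ne_zero (nz2 hN) (nz2 hD)

private lemma seq_unique {K : Type*} [Field K] (b c : ℕ) (x y : ℤ → K)
    (hx : ∀ m : ℤ, x (m+1) * x (m-1) = if Odd m then x m ^ b + 1 else x m ^ c + 1)
    (hy : ∀ m : ℤ, y (m+1) * y (m-1) = if Odd m then y m ^ b + 1 else y m ^ c + 1)
    (hy0 : ∀ m, y m ≠ 0) (h1 : x 1 = y 1) (h2 : x 2 = y 2) : ∀ m : ℤ, x m = y m := by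
  have key : ∀ n : ℕ, (x (1 + n) = y (1 + n) ∧ x (2 + n) = y (2 + n))
      ∧ (x (1 - n) = y (1 - n) ∧ x (2 - n) = y (2 - n)) := by
    intro n
    induction n with
    | zero => norm_num [h1, h2]
    | succ k ih =>
      obtain ⟨⟨hf1, hf2⟩, hb1, hb2⟩ := ih
      refine ⟨⟨?_, ?_⟩, ?_, ?_⟩
      · have h : (1 : ℤ) + ((k : ℤ) + 1) = 2 + k := by ring
        rw [Nat.cast_add, Nat.cast_one, h]; exact hf2
      · have e1 := hx (2 + (k:ℤ)); have e2 := hy (2 + (k:ℤ))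
        rw [hf2] at e1
        have hprev : x (2 + (k:ℤ) - 1) = y (2 + (k:ℤ) - 1) := by
          have h : (2 : ℤ) + (k:ℤ) - 1 = 1 + k := by ring
          rw [h]; exact hf1
        rw [hprev] at e1
        have hne := hy0 (2 + (k:ℤ) - 1)
        have hcol : (2 : ℤ) + ((k:ℤ) + 1) = (2 + (k:ℤ)) + 1 := by ring
        rw [Nat.cast_add, Nat.cast_one, hcol]
        exact mul_right_cancel₀ hne (e1.trans e2.symm)
      · have e1 := hx (1 - (k:ℤ)); have e2 := hy (1 - (k:ℤ))
        rw [hb1] at e1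
        have hnext : x (1 - (k:ℤ) + 1) = y (1 - (k:ℤ) + 1) := by
          have h : (1 : ℤ) - (k:ℤ) + 1 = 2 - k := by ring
          rw [h]; exact hb2
        rw [hnext] at e1
        have hne := hy0 (1 - (k:ℤ) + 1)
        have hcol : (1 : ℤ) - ((k:ℤ) + 1) = 1 - (k:ℤ) - 1 := by ring
        rw [Nat.cast_add, Nat.cast_one, hcol]
        exact mul_left_cancel₀ hne (e1.trans e2.symm)
      · have h : (2 : ℤ) - ((k:ℤ) + 1) = 1 - k := by ring
        rw [Nat.cast_add, Nat.cast_one, h]; exact hb1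
  intro m
  rcases le_total 1 m with h | h
  · obtain ⟨n, rfl⟩ : ∃ n : ℕ, m = 1 + n := ⟨(m - 1).toNat, by omega⟩
    exact (key n).1.1
  · obtain ⟨n, rfl⟩ : ∃ n : ℕ, m = 1 - n := ⟨(1 - m).toNat, by omega⟩
    exact (key n).2.1

private lemma finite_of_periodic {K : Type*} (x : ℤ → K) (p : ℤ) (hp : 0 < p)
    (f : ℤ → K) (h : ∀ m : ℤ, x m = f (m % p)) : (Set.range x).Finite := by
  apply Set.Finite.subset ((Set.finite_Icc (0 : ℤ) p).image f)
  rintro _ ⟨m, rfl⟩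
  rw [h m]
  exact Set.mem_image_of_mem f
    ⟨Int.emod_nonneg m hp.ne', (Int.emod_lt_of_pos m hp).le⟩

private lemma case_machine (b c : ℕ) (p : ℤ) (hp : 0 < p) (f : ℤ → K2)
    (hf0 : ∀ r : ℤ, 0 ≤ r → r < p → f r ≠ 0)
    (hfrec : ∀ m : ℤ, f ((m+1) % p) * f ((m-1) % p) =
      if Odd m then f (m % p) ^ b + 1 else f (m % p) ^ c + 1)
    (hf1 : f (1 % p) = algebraMap R2 K2 (X 0))
    (hf2 : f (2 % p) = algebraMap R2 K2 (X 1))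
    (x : ℤ → K2) (hx1 : x 1 = algebraMap R2 K2 (X 0))
    (hx2 : x 2 = algebraMap R2 K2 (X 1))
    (hrec : ∀ m : ℤ, x (m+1) * x (m-1) = if Odd m then x m ^ b + 1 else x m ^ c + 1) :
    (Set.range x).Finite := by
  have hf0' : ∀ m : ℤ, (fun m => f (m % p)) m ≠ 0 :=
    fun m => hf0 _ (Int.emod_nonneg m hp.ne') (Int.emod_lt_of_pos m hp)
  have key := seq_unique b c x (fun m => f (m % p)) hrec hfrec hf0'
    (hx1.trans hf1.symm) (hx2.trans hf2.symm)
  exact finite_of_periodic x p hp f key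

private noncomputable def f11 : ℤ → K2 := fun r =>
  if r = 1 then q2 (X 0) (1)
  else if r = 2 then q2 (X 1) (1)
  else if r = 3 then q2 (X 1 + 1) (X 0)
  else if r = 4 then q2 (X 0 + X 1 + 1) (X 0 * X 1)
  else q2 (X 0 + 1) (X 1)

private lemma case11 (x : ℤ → K2) (hx1 : x 1 = algebraMap R2 K2 (X 0))
    (hx2 : x 2 = algebraMap R2 K2 (X 1))
    (hrec : ∀ m : ℤ, x (m+1) * x (m-1) = if Odd m then x m ^ 1 + 1 else x m ^ 1 + 1) :
    (Set.range x).Finite := by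
  have hA : algebraMap R2 K2 (X 0) ≠ 0 := nz2 (by norm_num)
  have hB : algebraMap R2 K2 (X 1) ≠ 0 := nz2 (by norm_num)
  apply case_machine 1 1 5 (by norm_num) f11 ?_ ?_ ?_ ?_ x hx1 hx2 hrec
  · intro r h0 hlt
    have h : r = 0 ∨ r = 1 ∨ r = 2 ∨ r = 3 ∨ r = 4 := by omega
    rcases h with h | h | h | h | h <;> subst h <;>
      · norm_num [f11]
        exact q2_ne (by norm_num) (by norm_num)
  · intro m
    rw [ite_self]
    have h : m % 5 = 0 ∨ m % 5 = 1 ∨ m % 5 = 2 ∨ m % 5 = 3 ∨ m % 5 = 4 := by omega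
    rcases h with h | h | h | h | h
    · have e1 : (m+1) % 5 = 1 := by omega
      have e2 : (m-1) % 5 = 4 := by omega
      rw [h, e1, e2]
      norm_num [f11, q2, map_add, map_mul, map_pow, map_one, map_ofNat]
      all_goals field_simp
      all_goals ring
    · have e1 : (m+1) % 5 = 2 := by omega
      have e2 : (m-1) % 5 = 0 := by omega
      rw [h, e1, e2]
      norm_num [f11, q2, map_add, map_mul, map_pow, map_one, map_ofNat]
      all_goals field_simp
      all_goals ring
    · have e1 : (m+1) % 5 = 3 := by omega
      have e2 : (m-1) % 5 = 1 := by omega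
      rw [h, e1, e2]
      norm_num [f11, q2, map_add, map_mul, map_pow, map_one, map_ofNat]
      all_goals field_simp
      all_goals ring
    · have e1 : (m+1) % 5 = 4 := by omega
      have e2 : (m-1) % 5 = 2 := by omega
      rw [h, e1, e2]
      norm_num [f11, q2, map_add, map_mul, map_pow, map_one, map_ofNat]
      all_goals field_simp
      all_goals ring
    · have e1 : (m+1) % 5 = 0 := by omega
      have e2 : (m-1) % 5 = 3 := by omega
      rw [h, e1, e2]
      norm_num [f11, q2, map_add, map_mul, map_pow, map_one, map_ofNat]
      all_goals field_simp
      all_goals ring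
  · norm_num [f11, q2]
  · norm_num [f11, q2]

private noncomputable def f12 : ℤ → K2 := fun r =>
  if r = 1 then q2 (X 0) (1)
  else if r = 2 then q2 (X 1) (1)
  else if r = 3 then q2 (X 1 ^ 2 + 1) (X 0)
  else if r = 4 then q2 (X 0 + X 1 ^ 2 + 1) (X 0 * X 1)
  else if r = 5 then q2 (X 0 ^ 2 + 2 * X 0 + X 1 ^ 2 + 1) (X 0 * X 1 ^ 2)
  else q2 (X 0 + 1) (X 1)

private lemma case12 (x : ℤ → K2) (hx1 : x 1 = algebraMap R2 K2 (X 0))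
    (hx2 : x 2 = algebraMap R2 K2 (X 1))
    (hrec : ∀ m : ℤ, x (m+1) * x (m-1) = if Odd m then x m ^ 1 + 1 else x m ^ 2 + 1) :
    (Set.range x).Finite := by
  have hA : algebraMap R2 K2 (X 0) ≠ 0 := nz2 (by norm_num)
  have hB : algebraMap R2 K2 (X 1) ≠ 0 := nz2 (by norm_num)
  apply case_machine 1 2 6 (by norm_num) f12 ?_ ?_ ?_ ?_ x hx1 hx2 hrec
  · intro r h0 hlt
    have h : r = 0 ∨ r = 1 ∨ r = 2 ∨ r = 3 ∨ r = 4 ∨ r = 5 := by omega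
    rcases h with h | h | h | h | h | h <;> subst h <;>
      · norm_num [f12]
        exact q2_ne (by norm_num) (by norm_num)
  · intro m
    have h : m % 6 = 0 ∨ m % 6 = 1 ∨ m % 6 = 2 ∨ m % 6 = 3 ∨ m % 6 = 4 ∨ m % 6 = 5 := by omega
    rcases h with h | h | h | h | h | h
    · have e1 : (m+1) % 6 = 1 := by omega
      have e2 : (m-1) % 6 = 5 := by omega
      have hpar : ¬ Odd m := by rw [Int.odd_iff]; omega
      rw [h, e1, e2, if_neg hpar]
      norm_num [f12, q2, map_add, map_mul, map_pow, map_one, map_ofNat]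
      all_goals field_simp
      all_goals ring
    · have e1 : (m+1) % 6 = 2 := by omega
      have e2 : (m-1) % 6 = 0 := by omega
      have hpar : Odd m := by rw [Int.odd_iff]; omega
      rw [h, e1, e2, if_pos hpar]
      norm_num [f12, q2, map_add, map_mul, map_pow, map_one, map_ofNat]
      all_goals field_simp
      all_goals ring
    · have e1 : (m+1) % 6 = 3 := by omega
      have e2 : (m-1) % 6 = 1 := by omega
      have hpar : ¬ Odd m := by rw [Int.odd_iff]; omega
      rw [h, e1, e2, if_neg hpar]
      norm_num [f12, q2, map_add, map_mul, map_pow, map_one, map_ofNat]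
      all_goals field_simp
      all_goals ring
    · have e1 : (m+1) % 6 = 4 := by omega
      have e2 : (m-1) % 6 = 2 := by omega
      have hpar : Odd m := by rw [Int.odd_iff]; omega
      rw [h, e1, e2, if_pos hpar]
      norm_num [f12, q2, map_add, map_mul, map_pow, map_one, map_ofNat]
      all_goals field_simp
      all_goals ring
    · have e1 : (m+1) % 6 = 5 := by omega
      have e2 : (m-1) % 6 = 3 := by omega
      have hpar : ¬ Odd m := by rw [Int.odd_iff]; omega
      rw [h, e1, e2, if_neg hpar]
      norm_num [f12, q2, map_add, map_mul, map_pow, map_one, map_ofNat]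
      all_goals field_simp
      all_goals ring
    · have e1 : (m+1) % 6 = 0 := by omega
      have e2 : (m-1) % 6 = 4 := by omega
      have hpar : Odd m := by rw [Int.odd_iff]; omega
      rw [h, e1, e2, if_pos hpar]
      norm_num [f12, q2, map_add, map_mul, map_pow, map_one, map_ofNat]
      all_goals field_simp
      all_goals ring
  · norm_num [f12, q2]
  · norm_num [f12, q2]

private noncomputable def f21 : ℤ → K2 := fun r =>
  if r = 1 then q2 (X 0) (1)
  else if r = 2 then q2 (X 1) (1)
  else if r = 3 then q2 (X 1 + 1) (X 0)
  else if r = 4 then q2 (X 0 ^ 2 + X 1 ^ 2 + 2 * X 1 + 1) (X 0 ^ 2 * X 1)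
  else if r = 5 then q2 (X 0 ^ 2 + X 1 + 1) (X 0 * X 1)
  else q2 (X 0 ^ 2 + 1) (X 1)

private lemma case21 (x : ℤ → K2) (hx1 : x 1 = algebraMap R2 K2 (X 0))
    (hx2 : x 2 = algebraMap R2 K2 (X 1))
    (hrec : ∀ m : ℤ, x (m+1) * x (m-1) = if Odd m then x m ^ 2 + 1 else x m ^ 1 + 1) :
    (Set.range x).Finite := by
  have hA : algebraMap R2 K2 (X 0) ≠ 0 := nz2 (by norm_num)
  have hB : algebraMap R2 K2 (X 1) ≠ 0 := nz2 (by norm_num)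
  apply case_machine 2 1 6 (by norm_num) f21 ?_ ?_ ?_ ?_ x hx1 hx2 hrec
  · intro r h0 hlt
    have h : r = 0 ∨ r = 1 ∨ r = 2 ∨ r = 3 ∨ r = 4 ∨ r = 5 := by omega
    rcases h with h | h | h | h | h | h <;> subst h <;>
      · norm_num [f21]
        exact q2_ne (by norm_num) (by norm_num)
  · intro m
    have h : m % 6 = 0 ∨ m % 6 = 1 ∨ m % 6 = 2 ∨ m % 6 = 3 ∨ m % 6 = 4 ∨ m % 6 = 5 := by omega
    rcases h with h | h | h | h | h | h
    · have e1 : (m+1) % 6 = 1 := by omega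
      have e2 : (m-1) % 6 = 5 := by omega
      have hpar : ¬ Odd m := by rw [Int.odd_iff]; omega
      rw [h, e1, e2, if_neg hpar]
      norm_num [f21, q2, map_add, map_mul, map_pow, map_one, map_ofNat]
      all_goals field_simp
      all_goals ring
    · have e1 : (m+1) % 6 = 2 := by omega
      have e2 : (m-1) % 6 = 0 := by omega
      have hpar : Odd m := by rw [Int.odd_iff]; omega
      rw [h, e1, e2, if_pos hpar]
      norm_num [f21, q2, map_add, map_mul, map_pow, map_one, map_ofNat]
      all_goals field_simp
      all_goals ring
    · have e1 : (m+1) % 6 = 3 := by omega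
      have e2 : (m-1) % 6 = 1 := by omega
      have hpar : ¬ Odd m := by rw [Int.odd_iff]; omega
      rw [h, e1, e2, if_neg hpar]
      norm_num [f21, q2, map_add, map_mul, map_pow, map_one, map_ofNat]
      all_goals field_simp
      all_goals ring
    · have e1 : (m+1) % 6 = 4 := by omega
      have e2 : (m-1) % 6 = 2 := by omega
      have hpar : Odd m := by rw [Int.odd_iff]; omega
      rw [h, e1, e2, if_pos hpar]
      norm_num [f21, q2, map_add, map_mul, map_pow, map_one, map_ofNat]
      all_goals field_simp
      all_goals ring
    · have e1 : (m+1) % 6 = 5 := by omega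
      have e2 : (m-1) % 6 = 3 := by omega
      have hpar : ¬ Odd m := by rw [Int.odd_iff]; omega
      rw [h, e1, e2, if_neg hpar]
      norm_num [f21, q2, map_add, map_mul, map_pow, map_one, map_ofNat]
      all_goals field_simp
      all_goals ring
    · have e1 : (m+1) % 6 = 0 := by omega
      have e2 : (m-1) % 6 = 4 := by omega
      have hpar : Odd m := by rw [Int.odd_iff]; omega
      rw [h, e1, e2, if_pos hpar]
      norm_num [f21, q2, map_add, map_mul, map_pow, map_one, map_ofNat]
      all_goals field_simp
      all_goals ring
  · norm_num [f21, q2]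
  · norm_num [f21, q2]

private noncomputable def f13 : ℤ → K2 := fun r =>
  if r = 1 then q2 (X 0) (1)
  else if r = 2 then q2 (X 1) (1)
  else if r = 3 then q2 (X 1 ^ 3 + 1) (X 0)
  else if r = 4 then q2 (X 0 + X 1 ^ 3 + 1) (X 0 * X 1)
  else if r = 5 then q2 (X 0 ^ 3 + 3 * X 0 ^ 2 + 3 * X 0 * X 1 ^ 3 + 3 * X 0 + X 1 ^ 6 + 2 * X 1 ^ 3 + 1) (X 0 ^ 2 * X 1 ^ 3)
  else if r = 6 then q2 (X 0 ^ 2 + 2 * X 0 + X 1 ^ 3 + 1) (X 0 * X 1 ^ 2)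
  else if r = 7 then q2 (X 0 ^ 3 + 3 * X 0 ^ 2 + 3 * X 0 + X 1 ^ 3 + 1) (X 0 * X 1 ^ 3)
  else q2 (X 0 + 1) (X 1)

private lemma case13 (x : ℤ → K2) (hx1 : x 1 = algebraMap R2 K2 (X 0))
    (hx2 : x 2 = algebraMap R2 K2 (X 1))
    (hrec : ∀ m : ℤ, x (m+1) * x (m-1) = if Odd m then x m ^ 1 + 1 else x m ^ 3 + 1) :
    (Set.range x).Finite := by
  have hA : algebraMap R2 K2 (X 0) ≠ 0 := nz2 (by norm_num)
  have hB : algebraMap R2 K2 (X 1) ≠ 0 := nz2 (by norm_num)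
  apply case_machine 1 3 8 (by norm_num) f13 ?_ ?_ ?_ ?_ x hx1 hx2 hrec
  · intro r h0 hlt
    have h : r = 0 ∨ r = 1 ∨ r = 2 ∨ r = 3 ∨ r = 4 ∨ r = 5 ∨ r = 6 ∨ r = 7 := by omega
    rcases h with h | h | h | h | h | h | h | h <;> subst h <;>
      · norm_num [f13]
        exact q2_ne (by norm_num) (by norm_num)
  · intro m
    have h : m % 8 = 0 ∨ m % 8 = 1 ∨ m % 8 = 2 ∨ m % 8 = 3 ∨ m % 8 = 4 ∨ m % 8 = 5 ∨ m % 8 = 6 ∨ m % 8 = 7 := by omega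
    rcases h with h | h | h | h | h | h | h | h
    · have e1 : (m+1) % 8 = 1 := by omega
      have e2 : (m-1) % 8 = 7 := by omega
      have hpar : ¬ Odd m := by rw [Int.odd_iff]; omega
      rw [h, e1, e2, if_neg hpar]
      norm_num [f13, q2, map_add, map_mul, map_pow, map_one, map_ofNat]
      all_goals field_simp
      all_goals ring
    · have e1 : (m+1) % 8 = 2 := by omega
      have e2 : (m-1) % 8 = 0 := by omega
      have hpar : Odd m := by rw [Int.odd_iff]; omega
      rw [h, e1, e2, if_pos hpar]
      norm_num [f13, q2, map_add, map_mul, map_pow, map_one, map_ofNat]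
      all_goals field_simp
      all_goals ring
    · have e1 : (m+1) % 8 = 3 := by omega
      have e2 : (m-1) % 8 = 1 := by omega
      have hpar : ¬ Odd m := by rw [Int.odd_iff]; omega
      rw [h, e1, e2, if_neg hpar]
      norm_num [f13, q2, map_add, map_mul, map_pow, map_one, map_ofNat]
      all_goals field_simp
      all_goals ring
    · have e1 : (m+1) % 8 = 4 := by omega
      have e2 : (m-1) % 8 = 2 := by omega
      have hpar : Odd m := by rw [Int.odd_iff]; omega
      rw [h, e1, e2, if_pos hpar]
      norm_num [f13, q2, map_add, map_mul, map_pow, map_one, map_ofNat]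
      all_goals field_simp
      all_goals ring
    · have e1 : (m+1) % 8 = 5 := by omega
      have e2 : (m-1) % 8 = 3 := by omega
      have hpar : ¬ Odd m := by rw [Int.odd_iff]; omega
      rw [h, e1, e2, if_neg hpar]
      norm_num [f13, q2, map_add, map_mul, map_pow, map_one, map_ofNat]
      all_goals field_simp
      all_goals ring
    · have e1 : (m+1) % 8 = 6 := by omega
      have e2 : (m-1) % 8 = 4 := by omega
      have hpar : Odd m := by rw [Int.odd_iff]; omega
      rw [h, e1, e2, if_pos hpar]
      norm_num [f13, q2, map_add, map_mul, map_pow, map_one, map_ofNat]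
      all_goals field_simp
      all_goals ring
    · have e1 : (m+1) % 8 = 7 := by omega
      have e2 : (m-1) % 8 = 5 := by omega
      have hpar : ¬ Odd m := by rw [Int.odd_iff]; omega
      rw [h, e1, e2, if_neg hpar]
      norm_num [f13, q2, map_add, map_mul, map_pow, map_one, map_ofNat]
      all_goals field_simp
      all_goals ring
    · have e1 : (m+1) % 8 = 0 := by omega
      have e2 : (m-1) % 8 = 6 := by omega
      have hpar : Odd m := by rw [Int.odd_iff]; omega
      rw [h, e1, e2, if_pos hpar]
      norm_num [f13, q2, map_add, map_mul, map_pow, map_one, map_ofNat]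
      all_goals field_simp
      all_goals ring
  · norm_num [f13, q2]
  · norm_num [f13, q2]

private noncomputable def f31 : ℤ → K2 := fun r =>
  if r = 1 then q2 (X 0) (1)
  else if r = 2 then q2 (X 1) (1)
  else if r = 3 then q2 (X 1 + 1) (X 0)
  else if r = 4 then q2 (X 0 ^ 3 + X 1 ^ 3 + 3 * X 1 ^ 2 + 3 * X 1 + 1) (X 0 ^ 3 * X 1)
  else if r = 5 then q2 (X 0 ^ 3 + X 1 ^ 2 + 2 * X 1 + 1) (X 0 ^ 2 * X 1)
  else if r = 6 then q2 (X 0 ^ 6 + 3 * X 0 ^ 3 * X 1 + 2 * X 0 ^ 3 + X 1 ^ 3 + 3 * X 1 ^ 2 + 3 * X 1 + 1) (X 0 ^ 3 * X 1 ^ 2)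
  else if r = 7 then q2 (X 0 ^ 3 + X 1 + 1) (X 0 * X 1)
  else q2 (X 0 ^ 3 + 1) (X 1)

private lemma case31 (x : ℤ → K2) (hx1 : x 1 = algebraMap R2 K2 (X 0))
    (hx2 : x 2 = algebraMap R2 K2 (X 1))
    (hrec : ∀ m : ℤ, x (m+1) * x (m-1) = if Odd m then x m ^ 3 + 1 else x m ^ 1 + 1) :
    (Set.range x).Finite := by
  have hA : algebraMap R2 K2 (X 0) ≠ 0 := nz2 (by norm_num)
  have hB : algebraMap R2 K2 (X 1) ≠ 0 := nz2 (by norm_num)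
  apply case_machine 3 1 8 (by norm_num) f31 ?_ ?_ ?_ ?_ x hx1 hx2 hrec
  · intro r h0 hlt
    have h : r = 0 ∨ r = 1 ∨ r = 2 ∨ r = 3 ∨ r = 4 ∨ r = 5 ∨ r = 6 ∨ r = 7 := by omega
    rcases h with h | h | h | h | h | h | h | h <;> subst h <;>
      · norm_num [f31]
        exact q2_ne (by norm_num) (by norm_num)
  · intro m
    have h : m % 8 = 0 ∨ m % 8 = 1 ∨ m % 8 = 2 ∨ m % 8 = 3 ∨ m % 8 = 4 ∨ m % 8 = 5 ∨ m % 8 = 6 ∨ m % 8 = 7 := by omega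
    rcases h with h | h | h | h | h | h | h | h
    · have e1 : (m+1) % 8 = 1 := by omega
      have e2 : (m-1) % 8 = 7 := by omega
      have hpar : ¬ Odd m := by rw [Int.odd_iff]; omega
      rw [h, e1, e2, if_neg hpar]
      norm_num [f31, q2, map_add, map_mul, map_pow, map_one, map_ofNat]
      all_goals field_simp
      all_goals ring
    · have e1 : (m+1) % 8 = 2 := by omega
      have e2 : (m-1) % 8 = 0 := by omega
      have hpar : Odd m := by rw [Int.odd_iff]; omega
      rw [h, e1, e2, if_pos hpar]
      norm_num [f31, q2, map_add, map_mul, map_pow, map_one, map_ofNat]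
      all_goals field_simp
      all_goals ring
    · have e1 : (m+1) % 8 = 3 := by omega
      have e2 : (m-1) % 8 = 1 := by omega
      have hpar : ¬ Odd m := by rw [Int.odd_iff]; omega
      rw [h, e1, e2, if_neg hpar]
      norm_num [f31, q2, map_add, map_mul, map_pow, map_one, map_ofNat]
      all_goals field_simp
      all_goals ring
    · have e1 : (m+1) % 8 = 4 := by omega
      have e2 : (m-1) % 8 = 2 := by omega
      have hpar : Odd m := by rw [Int.odd_iff]; omega
      rw [h, e1, e2, if_pos hpar]
      norm_num [f31, q2, map_add, map_mul, map_pow, map_one, map_ofNat]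
      all_goals field_simp
      all_goals ring
    · have e1 : (m+1) % 8 = 5 := by omega
      have e2 : (m-1) % 8 = 3 := by omega
      have hpar : ¬ Odd m := by rw [Int.odd_iff]; omega
      rw [h, e1, e2, if_neg hpar]
      norm_num [f31, q2, map_add, map_mul, map_pow, map_one, map_ofNat]
      all_goals field_simp
      all_goals ring
    · have e1 : (m+1) % 8 = 6 := by omega
      have e2 : (m-1) % 8 = 4 := by omega
      have hpar : Odd m := by rw [Int.odd_iff]; omega
      rw [h, e1, e2, if_pos hpar]
      norm_num [f31, q2, map_add, map_mul, map_pow, map_one, map_ofNat]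
      all_goals field_simp
      all_goals ring
    · have e1 : (m+1) % 8 = 7 := by omega
      have e2 : (m-1) % 8 = 5 := by omega
      have hpar : ¬ Odd m := by rw [Int.odd_iff]; omega
      rw [h, e1, e2, if_neg hpar]
      norm_num [f31, q2, map_add, map_mul, map_pow, map_one, map_ofNat]
      all_goals field_simp
      all_goals ring
    · have e1 : (m+1) % 8 = 0 := by omega
      have e2 : (m-1) % 8 = 6 := by omega
      have hpar : Odd m := by rw [Int.odd_iff]; omega
      rw [h, e1, e2, if_pos hpar]
      norm_num [f31, q2, map_add, map_mul, map_pow, map_one, map_ofNat]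
      all_goals field_simp
      all_goals ring
  · norm_num [f31, q2]
  · norm_num [f31, q2]

/-- if `b * c ≤ 3` then the set of cluster variables of `A(b,c)`
is finite (finite type). -/
theorem cluster_variables_finite_of_le_three
    (b c : ℕ) (hb : 0 < b) (hc : 0 < c) (hbc : b * c ≤ 3)
    (x : ℤ → FractionRing (MvPolynomial (Fin 2) ℚ))
    (hx1 : x 1 = algebraMap (MvPolynomial (Fin 2) ℚ) _ (MvPolynomial.X 0))
    (hx2 : x 2 = algebraMap (MvPolynomial (Fin 2) ℚ) _ (MvPolynomial.X 1))
    (hrec : ∀ m : ℤ, x (m + 1) * x (m - 1) =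
      if Odd m then x m ^ b + 1 else x m ^ c + 1) :
    (Set.range x).Finite := by
  have hb3 : b ≤ 3 := by nlinarith
  have hc3 : c ≤ 3 := by nlinarith
  interval_cases b <;> interval_cases c <;> first
    | exact case11 x hx1 hx2 hrec
    | exact case12 x hx1 hx2 hrec
    | exact case21 x hx1 hx2 hrec
    | exact case13 x hx1 hx2 hrec
    | exact case31 x hx1 hx2 hrec
    | omega
end

section
/- In the quantum torus T over Z[v^{±1}] generated by X_1^{±1}, X_2^{±1} with relation X_2 X_1 = v^2 X_1 X_2, the quantum cluster variables X_m defined by the quantum exchange relations satisfy the quasi-commutation relation X_{m+1} X_m = v^2 X_m X_{m+1} for all m ∈ Z. -/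
/-!
Write `P m` for the relation `X (m + 1) * X m = v ^ 2 * (X m * X (m + 1))`.
The exchange relation expresses `X (m + 1) * X (m - 1)` as a polynomial in `X m` with central
coefficients, so it commutes with `X m`; multiplying by the nonzero `X (m + 1)` or `X (m - 1)`
then shows `P (m - 1) ↔ P m`. Starting from `P 1`, induction in both directions gives every `P m`.
-/

theorem Commute.pow_mul_pow_add_one {R : Type*} [Semiring R] {q x : R}
    (hq : ∀ a, Commute q a) (n : ℕ) : Commute x (q ^ n * x ^ n + 1) :=
  (((hq x).symm.pow_right n).mul_right ((Commute.refl x).pow_right n)).add_right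
    (Commute.one_right x)

theorem quasiCommute_iff_of_commute_mul {M : Type*} [MonoidWithZero M] [IsCancelMulZero M]
    {q x y z : M}
    (hq : ∀ a, Commute q a) (hy : y ≠ 0) (hz : z ≠ 0) (hxyz : Commute x (y * z)) :
    x * z = q * (z * x) ↔ y * x = q * (x * y) := by
  constructor
  · intro h
    apply mul_right_cancel₀ hz
    calc y * x * z = y * q * (z * x) := by rw [mul_assoc, h, mul_assoc]
      _ = q * (y * z * x) := by rw [← (hq y).eq]; simp only [mul_assoc]
      _ = q * (x * y) * z := by rw [← hxyz.eq]; simp only [mul_assoc]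
  · intro h
    apply mul_left_cancel₀ hy
    calc y * (x * z) = q * (x * (y * z)) := by rw [← mul_assoc, h]; simp only [mul_assoc]
      _ = y * q * (z * x) := by rw [hxyz.eq, ← (hq y).eq]; simp only [mul_assoc]
      _ = y * (q * (z * x)) := mul_assoc y q _

theorem quantum_cluster_quasi_commutation_general
    (F : Type*) [DivisionRing F]
    (b c : ℕ)
    (v : F) (hvcentral : ∀ a : F, Commute v a)
    (X : ℤ → F) (hX : ∀ m : ℤ, X m ≠ 0)
    (hcomm : X 2 * X 1 = v ^ 2 * (X 1 * X 2))
    (hrec : ∀ m : ℤ, X (m + 1) * X (m - 1) =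
      if Odd m then v ^ b * X m ^ b + 1 else v ^ c * X m ^ c + 1) :
    ∀ m : ℤ, X (m + 1) * X m = v ^ 2 * (X m * X (m + 1)) := by
  have hv2 : ∀ a : F, Commute (v ^ 2) a := fun a => (hvcentral a).pow_left 2
  have step (m : ℤ) : X m * X (m - 1) = v ^ 2 * (X (m - 1) * X m) ↔
      X (m + 1) * X m = v ^ 2 * (X m * X (m + 1)) := by
    refine quasiCommute_iff_of_commute_mul hv2 (hX _) (hX _) ?_
    rw [hrec m]
    split_ifs <;> exact Commute.pow_mul_pow_add_one hvcentral _
  intro m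
  induction m using Int.inductionOn' (b := 1) with
  | zero => exact hcomm
  | succ k _ ih => simpa using (step (k + 1)).1 (by simpa using ih)
  | pred k _ ih => simpa using (step k).2 ih

/-- in the skew field of fractions of the quantum torus, the quantum
cluster variables defined by the quantum exchange relations satisfy the
quasi-commutation relation `X (m+1) * X m = v ^ 2 * (X m * X (m+1))` for all `m`. -/
theorem quantum_cluster_quasi_commutation
    (F : Type*) [DivisionRing F]
    (b c : ℕ) (hb : 0 < b) (hc : 0 < c)
    (v : F) (hv : v ≠ 0) (hvcentral : ∀ a : F, Commute v a)
    (X : ℤ → F) (hX : ∀ m : ℤ, X m ≠ 0)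
    (hcomm : X 2 * X 1 = v ^ 2 * (X 1 * X 2))
    (hrec : ∀ m : ℤ, X (m + 1) * X (m - 1) =
      if Odd m then v ^ b * X m ^ b + 1 else v ^ c * X m ^ c + 1) :
    ∀ m : ℤ, X (m + 1) * X m = v ^ 2 * (X m * X (m + 1)) :=
  quantum_cluster_quasi_commutation_general F b c v hvcentral X hX hcomm hrec
end

section
/- Every quantum cluster variable X_m of the rank 2 quantum cluster algebra A_v(b,c) is bar-invariant, where the bar-involution is the Z-linear antiautomorphism of the quantum torus sending v to v^{-1} and fixing X_1 and X_2. -/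
namespace QCVaux

variable {F : Type*} [DivisionRing F]

private lemma bar_pow (bar : F →+ F) (h : ∀ a b : F, bar (a * b) = bar b * bar a)
    (h1 : bar 1 = 1) (x : F) : ∀ n : ℕ, bar (x ^ n) = (bar x) ^ n
  | 0 => by simpa using h1
  | (n+1) => by rw [pow_succ, h, bar_pow bar h h1 x n, pow_succ']

private lemma bar_inv (bar : F →+ F) (h : ∀ a b : F, bar (a * b) = bar b * bar a)
    (h1 : bar 1 = 1) (x : F) (hx : x ≠ 0) : bar x⁻¹ = (bar x)⁻¹ := by
  have : bar x⁻¹ * bar x = 1 := by rw [← h, mul_inv_cancel₀ hx, h1]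
  exact eq_inv_of_mul_eq_one_left this

/-- from `Z * Y = w * (Y * Z)` with `w` central, pull `Z` through powers of `Y` -/
private lemma pow_swap (w Y Z : F) (hw : ∀ a : F, Commute w a)
    (h : Z * Y = w * (Y * Z)) : ∀ e : ℕ, Z * Y ^ e = w ^ e * (Y ^ e * Z)
  | 0 => by simp
  | (e+1) => by
      rw [pow_succ, ← mul_assoc, pow_swap w Y Z hw h e, mul_assoc, mul_assoc, h,
        ← mul_assoc, ← mul_assoc, mul_assoc (w ^ e) (Y ^ e) w, ← (hw (Y ^ e)).eq,
        ← mul_assoc (w ^ e) w (Y ^ e), ← pow_succ, mul_assoc,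
        ← mul_assoc (Y ^ e) Y Z]

/-- from `Y * Z = w * (Z * Y)` with `w` central, `Z⁻¹ * Y = w * (Y * Z⁻¹)` -/
private lemma inv_swap (w Y Z : F) (hZ : Z ≠ 0) (hw : ∀ a : F, Commute w a)
    (q : Y * Z = w * (Z * Y)) : Z⁻¹ * Y = w * (Y * Z⁻¹) := by
  apply mul_right_cancel₀ hZ
  have l : Z⁻¹ * Y * Z = w * Y := by
    rw [mul_assoc, q, ← mul_assoc, ← (hw Z⁻¹).eq, mul_assoc, ← mul_assoc Z⁻¹ Z Y,
      inv_mul_cancel₀ hZ, one_mul]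
  have r : w * (Y * Z⁻¹) * Z = w * Y := by
    rw [mul_assoc, mul_assoc, inv_mul_cancel₀ hZ, mul_one]
  rw [l, r]

/-- from `Y * Z = w * (Z * Y)` with `w` central, `Z * Y⁻¹ = w * (Y⁻¹ * Z)` -/
private lemma inv_swap' (w Y Z : F) (hY : Y ≠ 0) (hw : ∀ a : F, Commute w a)
    (q : Y * Z = w * (Z * Y)) : Z * Y⁻¹ = w * (Y⁻¹ * Z) := by
  apply mul_left_cancel₀ hY
  have l : Y * (Z * Y⁻¹) = w * Z := by
    rw [← mul_assoc, q, mul_assoc, mul_assoc, mul_inv_cancel₀ hY, mul_one]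
  have r : Y * (w * (Y⁻¹ * Z)) = w * Z := by
    rw [← mul_assoc, ← (hw Y).eq, mul_assoc w Y, ← mul_assoc Y Y⁻¹ Z,
      mul_inv_cancel₀ hY, one_mul]
  rw [l, r]

end QCVaux

open QCVaux in
/-- every quantum cluster variable is bar-invariant, where the
bar-involution is the `ℤ`-linear antiautomorphism sending `v` to `v⁻¹` and
fixing `X 1` and `X 2`. -/
theorem quantum_cluster_variables_bar_invariant
    (F : Type*) [DivisionRing F]
    (b c : ℕ) (hb : 0 < b) (hc : 0 < c)
    (v : F) (hv : v ≠ 0) (hvcentral : ∀ a : F, Commute v a)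
    (X : ℤ → F) (hX : ∀ m : ℤ, X m ≠ 0)
    (hcomm : X 2 * X 1 = v ^ 2 * (X 1 * X 2))
    (hrec : ∀ m : ℤ, X (m + 1) * X (m - 1) =
      if Odd m then v ^ b * X m ^ b + 1 else v ^ c * X m ^ c + 1)
    (bar : F →+ F)
    (hbar_anti : ∀ a b : F, bar (a * b) = bar b * bar a)
    (hbar_one : bar 1 = 1)
    (hbar_v : bar v = v⁻¹)
    (hbar_X1 : bar (X 1) = X 1)
    (hbar_X2 : bar (X 2) = X 2) :
    ∀ m : ℤ, bar (X m) = X m := by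
  have hre : ∀ m : ℤ, ∃ e : ℕ, X (m + 1) * X (m - 1) = v ^ e * X m ^ e + 1 := by
    intro m
    by_cases h : Odd m
    · exact ⟨b, by rw [hrec]; simp [h]⟩
    · exact ⟨c, by rw [hrec]; simp [h]⟩
  have hv2 : (v : F) ^ 2 ≠ 0 := pow_ne_zero _ hv
  have cv2 : ∀ a : F, Commute (v ^ 2) a := fun a => (hvcentral a).pow_left 2
  -- quasi-commutation, upward step
  have qup : ∀ m : ℤ, X (m + 1) * X m = v ^ 2 * (X m * X (m + 1)) →
      X (m + 1 + 1) * X (m + 1) = v ^ 2 * (X (m + 1) * X (m + 1 + 1)) := by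
    intro m hq
    obtain ⟨e, he⟩ := hre (m + 1)
    rw [add_sub_cancel_right] at he
    have hC : X (m + 1 + 1) = (v ^ e * X (m + 1) ^ e + 1) * (X m)⁻¹ := by
      rw [← he, mul_assoc, mul_inv_cancel₀ (hX m), mul_one]
    have hs : (X m)⁻¹ * X (m + 1) = v ^ 2 * (X (m + 1) * (X m)⁻¹) :=
      inv_swap _ _ _ (hX m) cv2 hq
    have cBR : Commute (X (m + 1)) (v ^ e * X (m + 1) ^ e + 1) :=
      (((hvcentral (X (m + 1))).pow_left e).symm.mul_right
        ((Commute.refl (X (m + 1))).pow_right e)).add_right (Commute.one_right _)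
    calc X (m + 1 + 1) * X (m + 1)
        = (v ^ e * X (m + 1) ^ e + 1) * ((X m)⁻¹ * X (m + 1)) := by rw [hC, mul_assoc]
      _ = (v ^ e * X (m + 1) ^ e + 1) * (v ^ 2 * (X (m + 1) * (X m)⁻¹)) := by rw [hs]
      _ = v ^ 2 * ((v ^ e * X (m + 1) ^ e + 1) * (X (m + 1) * (X m)⁻¹)) := by
          rw [← mul_assoc, ← (cv2 _).eq, mul_assoc]
      _ = v ^ 2 * (X (m + 1) * ((v ^ e * X (m + 1) ^ e + 1) * (X m)⁻¹)) := by
          rw [← mul_assoc _ (X (m + 1)) ((X m)⁻¹), ← cBR.eq,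
            mul_assoc (X (m + 1)) _ ((X m)⁻¹)]
      _ = v ^ 2 * (X (m + 1) * X (m + 1 + 1)) := by rw [← hC]
  -- quasi-commutation, downward step
  have qdown : ∀ m : ℤ, X (m + 1) * X m = v ^ 2 * (X m * X (m + 1)) →
      X m * X (m - 1) = v ^ 2 * (X (m - 1) * X m) := by
    intro m hq
    obtain ⟨e, he⟩ := hre m
    have hD : X (m - 1) = (X (m + 1))⁻¹ * (v ^ e * X m ^ e + 1) := by
      rw [← he, ← mul_assoc, inv_mul_cancel₀ (hX (m + 1)), one_mul]
    have hs : X m * (X (m + 1))⁻¹ = v ^ 2 * ((X (m + 1))⁻¹ * X m) :=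
      inv_swap' _ _ _ (hX (m + 1)) cv2 hq
    have cBR : Commute (X m) (v ^ e * X m ^ e + 1) :=
      (((hvcentral (X m)).pow_left e).symm.mul_right
        ((Commute.refl (X m)).pow_right e)).add_right (Commute.one_right _)
    calc X m * X (m - 1)
        = (X m * (X (m + 1))⁻¹) * (v ^ e * X m ^ e + 1) := by rw [hD, ← mul_assoc]
      _ = v ^ 2 * ((X (m + 1))⁻¹ * X m) * (v ^ e * X m ^ e + 1) := by rw [hs]
      _ = v ^ 2 * ((X (m + 1))⁻¹ * ((v ^ e * X m ^ e + 1) * X m)) := by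
          rw [mul_assoc, mul_assoc ((X (m + 1))⁻¹), cBR.eq]
      _ = v ^ 2 * (((X (m + 1))⁻¹ * (v ^ e * X m ^ e + 1)) * X m) := by
          rw [← mul_assoc ((X (m + 1))⁻¹)]
      _ = v ^ 2 * (X (m - 1) * X m) := by rw [← hD]
  -- quasi-commutation everywhere
  have hQ : ∀ m : ℤ, X (m + 1) * X m = v ^ 2 * (X m * X (m + 1)) := by
    have key : ∀ n : ℕ,
        (X (1 + n + 1) * X (1 + n) = v ^ 2 * (X (1 + n) * X (1 + n + 1))) ∧
        (X (1 - n + 1) * X (1 - n) = v ^ 2 * (X (1 - n) * X (1 - n + 1))) := by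
      intro n
      induction n with
      | zero => constructor <;> · norm_num; exact hcomm
      | succ k ih =>
        constructor
        · rw [show ((1 : ℤ) + (↑(k + 1) : ℤ)) = 1 + (k : ℤ) + 1 by push_cast; ring]
          exact qup (1 + k) ih.1
        · rw [show ((1 : ℤ) - (↑(k + 1) : ℤ) + 1) = 1 - (k : ℤ) by push_cast; ring,
            show ((1 : ℤ) - (↑(k + 1) : ℤ)) = 1 - (k : ℤ) - 1 by push_cast; ring]
          exact qdown (1 - k) (by simpa using ih.2)
    intro m
    rcases le_or_gt 1 m with hm | hm
    · obtain ⟨n, rfl⟩ : ∃ n : ℕ, m = 1 + (n : ℤ) := ⟨(m - 1).toNat, by omega⟩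
      exact (key n).1
    · obtain ⟨n, rfl⟩ : ∃ n : ℕ, m = 1 - (n : ℤ) := ⟨(1 - m).toNat, by omega⟩
      exact (key n).2
  -- exchange relation in both orders
  have hvv : v * (v ^ 2)⁻¹ = v⁻¹ := by
    rw [sq, mul_inv_rev, ← mul_assoc, mul_inv_cancel₀ hv, one_mul]
  have hfull : ∀ m : ℤ, ∃ e : ℕ, X (m + 1) * X (m - 1) = v ^ e * X m ^ e + 1 ∧
      X (m - 1) * X (m + 1) = (v⁻¹) ^ e * X m ^ e + 1 := by
    intro m
    obtain ⟨e, he⟩ := hre m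
    refine ⟨e, he, ?_⟩
    have hq := hQ (m - 1)
    rw [sub_add_cancel] at hq
    have hw : ∀ a : F, Commute ((v ^ 2)⁻¹) a := fun a => (cv2 a).inv_left₀
    have hZY : X (m - 1) * X m = (v ^ 2)⁻¹ * (X m * X (m - 1)) := by
      rw [hq, ← mul_assoc, inv_mul_cancel₀ hv2, one_mul]
    have hpow := pow_swap ((v ^ 2)⁻¹) (X m) (X (m - 1)) hw hZY e
    have hXp1 : X (m + 1) = (v ^ e * X m ^ e + 1) * (X (m - 1))⁻¹ := by
      rw [← he, mul_assoc, mul_inv_cancel₀ (hX (m - 1)), mul_one]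
    have hmain : X (m - 1) * (v ^ e * X m ^ e + 1)
        = ((v⁻¹) ^ e * X m ^ e) * X (m - 1) + X (m - 1) := by
      rw [mul_add, mul_one, ← mul_assoc, ← ((hvcentral (X (m - 1))).pow_left e).eq,
        mul_assoc, hpow, ← mul_assoc, ← (hvcentral ((v ^ 2)⁻¹)).mul_pow e, hvv,
        ← mul_assoc]
    rw [hXp1, ← mul_assoc, hmain, add_mul, mul_assoc, mul_inv_cancel₀ (hX (m - 1)),
      mul_one]
  -- bar of basic pieces
  have hbar_inv' : ∀ x : F, x ≠ 0 → bar x⁻¹ = (bar x)⁻¹ :=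
    fun x hx => bar_inv bar hbar_anti hbar_one x hx
  have barR : ∀ (m : ℤ) (e : ℕ), bar (X m) = X m →
      bar (v ^ e * X m ^ e + 1) = (v⁻¹) ^ e * X m ^ e + 1 := by
    intro m e hm
    rw [map_add, hbar_anti, bar_pow bar hbar_anti hbar_one, hm,
      bar_pow bar hbar_anti hbar_one, hbar_v, hbar_one,
      ← (((hvcentral (X m ^ e)).inv_left₀).pow_left e).eq]
  -- bar-invariance: upward step
  have step_up : ∀ m : ℤ, bar (X m) = X m → bar (X (m + 1)) = X (m + 1) →
      bar (X (m + 1 + 1)) = X (m + 1 + 1) := by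
    intro m h1 h2
    obtain ⟨e, he, hrv⟩ := hfull (m + 1)
    rw [add_sub_cancel_right] at he hrv
    have hC : X (m + 1 + 1) = (v ^ e * X (m + 1) ^ e + 1) * (X m)⁻¹ := by
      rw [← he, mul_assoc, mul_inv_cancel₀ (hX m), mul_one]
    calc bar (X (m + 1 + 1))
        = bar ((v ^ e * X (m + 1) ^ e + 1) * (X m)⁻¹) := by rw [← hC]
      _ = (X m)⁻¹ * ((v⁻¹) ^ e * X (m + 1) ^ e + 1) := by
          rw [hbar_anti, hbar_inv' _ (hX m), h1, barR (m + 1) e h2]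
      _ = (X m)⁻¹ * (X m * X (m + 1 + 1)) := by rw [hrv]
      _ = X (m + 1 + 1) := by rw [← mul_assoc, inv_mul_cancel₀ (hX m), one_mul]
  -- bar-invariance: downward step
  have step_down : ∀ m : ℤ, bar (X m) = X m → bar (X (m + 1)) = X (m + 1) →
      bar (X (m - 1)) = X (m - 1) := by
    intro m h1 h2
    obtain ⟨e, he, hrv⟩ := hfull m
    have hD : X (m - 1) = (X (m + 1))⁻¹ * (v ^ e * X m ^ e + 1) := by
      rw [← he, ← mul_assoc, inv_mul_cancel₀ (hX (m + 1)), one_mul]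
    calc bar (X (m - 1))
        = bar ((X (m + 1))⁻¹ * (v ^ e * X m ^ e + 1)) := by rw [← hD]
      _ = ((v⁻¹) ^ e * X m ^ e + 1) * (X (m + 1))⁻¹ := by
          rw [hbar_anti, hbar_inv' _ (hX (m + 1)), h2, barR m e h1]
      _ = (X (m - 1) * X (m + 1)) * (X (m + 1))⁻¹ := by rw [hrv]
      _ = X (m - 1) := by rw [mul_assoc, mul_inv_cancel₀ (hX (m + 1)), mul_one]
  -- main two-sided induction
  have key : ∀ n : ℕ,
      (bar (X (1 + n)) = X (1 + n) ∧ bar (X (1 + n + 1)) = X (1 + n + 1)) ∧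
      (bar (X (1 - n)) = X (1 - n) ∧ bar (X (1 - n + 1)) = X (1 - n + 1)) := by
    intro n
    induction n with
    | zero =>
      refine ⟨⟨?_, ?_⟩, ?_, ?_⟩ <;> norm_num <;> first | exact hbar_X1 | exact hbar_X2
    | succ k ih =>
      refine ⟨⟨?_, ?_⟩, ?_, ?_⟩
      · rw [show ((1 : ℤ) + (↑(k + 1) : ℤ)) = 1 + (k : ℤ) + 1 by push_cast; ring]
        exact ih.1.2
      · rw [show ((1 : ℤ) + (↑(k + 1) : ℤ)) = 1 + (k : ℤ) + 1 by push_cast; ring]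
        exact step_up (1 + k) ih.1.1 ih.1.2
      · rw [show ((1 : ℤ) - (↑(k + 1) : ℤ)) = 1 - (k : ℤ) - 1 by push_cast; ring]
        exact step_down (1 - k) ih.2.1 (by simpa using ih.2.2)
      · rw [show ((1 : ℤ) - (↑(k + 1) : ℤ) + 1) = 1 - (k : ℤ) by push_cast; ring]
        exact ih.2.1
  intro m
  rcases le_or_gt 1 m with hm | hm
  · obtain ⟨n, rfl⟩ : ∃ n : ℕ, m = 1 + (n : ℤ) := ⟨(m - 1).toNat, by omega⟩
    exact (key n).1.1
  · obtain ⟨n, rfl⟩ : ∃ n : ℕ, m = 1 - (n : ℤ) := ⟨(1 - m).toNat, by omega⟩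
    exact (key n).2.1
end

section
/- For (b,c) = (2,3) and (a_1,a_2) = (3,4), the coefficient e(2,1) determined by the quantum greedy recurrence equals v^2 − 1 + v^{−2}; in particular it is not a polynomial with nonnegative coefficients. -/
/-!
Only four instances of the recurrence matter. Since `[n choose 1]_w = [n]_w` and
`[2 choose 2]_w = 1`, they give `e(1,0) = [4]_{v²}`, `e(0,1) = [3]_{v³}`, `e(1,1) = e(1,0)` and
`e(2,1) = e(1,1) - e(0,1)`, so
`e(2,1) = (v⁶ + v² + v⁻² + v⁻⁶) - (v⁶ + 1 + v⁻⁶) = v² - 1 + v⁻²`.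
Its Laurent coefficient at `v⁰` is `-1`, whereas sums of monomials `vⁿ` have only nonnegative
Laurent coefficients.
-/

/-- The bar-invariant quantum integer `[n]_w = (w^n - w^(-n))/(w - w⁻¹)`. -/
noncomputable def qint {F : Type*} [Field F] (w : F) (n : ℤ) : F :=
  (w ^ n - w ^ (-n)) / (w - w⁻¹)

/-- The bar-invariant quantum binomial coefficient `[n choose k]_w`. -/
noncomputable def qbinom {F : Type*} [Field F] (w : F) (n : ℤ) (k : ℕ) : F :=
  (∏ i ∈ Finset.range k, qint w (n - i)) / (∏ i ∈ Finset.range k, qint w (i + 1))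

section QuantumIntegers

variable {F : Type*} [Field F] {w : F}

theorem zpow_sub_zpow_neg_ne_zero (hw₀ : w ≠ 0) (hw : ∀ n : ℤ, w ^ n = 1 → n = 0) {n : ℤ}
    (hn : n ≠ 0) : w ^ n - w ^ (-n) ≠ 0 := by
  intro h
  have h2n : w ^ (2 * n) = 1 := by
    rw [two_mul, zpow_add₀ hw₀]
    nth_rw 1 [sub_eq_zero.mp h]
    rw [← zpow_add₀ hw₀, neg_add_cancel, zpow_zero]
  exact hn (by linarith [hw _ h2n])

theorem qint_ne_zero (hw₀ : w ≠ 0) (hw : ∀ n : ℤ, w ^ n = 1 → n = 0) {n : ℤ} (hn : n ≠ 0) :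
    qint w n ≠ 0 := by
  have hden := zpow_sub_zpow_neg_ne_zero hw₀ hw one_ne_zero
  rw [zpow_one, zpow_neg_one] at hden
  exact div_ne_zero (zpow_sub_zpow_neg_ne_zero hw₀ hw hn) hden

theorem qint_one (hw : w - w⁻¹ ≠ 0) : qint w 1 = 1 := by
  rw [qint, zpow_one, zpow_neg_one, div_self hw]

theorem qint_three (hw : w - w⁻¹ ≠ 0) :
    qint w 3 = w ^ (2 : ℤ) + 1 + w ^ (-2 : ℤ) := by
  have hw₀ : w ≠ 0 := by rintro rfl; simp at hw
  rw [qint, div_eq_iff hw]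
  simp only [zpow_neg, zpow_ofNat]
  field_simp
  ring

theorem qint_four (hw : w - w⁻¹ ≠ 0) :
    qint w 4 = w ^ (3 : ℤ) + w + w ^ (-1 : ℤ) + w ^ (-3 : ℤ) := by
  have hw₀ : w ≠ 0 := by rintro rfl; simp at hw
  rw [qint, div_eq_iff hw]
  simp only [zpow_neg, zpow_ofNat]
  field_simp
  ring

theorem qbinom_one (hw : w - w⁻¹ ≠ 0) (n : ℤ) : qbinom w n 1 = qint w n := by
  simp [qbinom, qint_one hw]

theorem qbinom_self (hw₀ : w ≠ 0) (hw : ∀ n : ℤ, w ^ n = 1 → n = 0) (k : ℕ) :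
    qbinom w k k = 1 := by
  have hreflect : ∏ i ∈ Finset.range k, qint w (k - i) = ∏ i ∈ Finset.range k, qint w (i + 1) := by
    rw [← Finset.prod_range_reflect]
    refine Finset.prod_congr rfl fun i hi => ?_
    rw [Finset.mem_range] at hi
    congr 1
    omega
  rw [qbinom, hreflect, div_self]
  exact Finset.prod_ne_zero_iff.mpr fun i _ => qint_ne_zero hw₀ hw (by omega)

end QuantumIntegers

namespace RatFunc

variable {K : Type*} [Field K]

theorem coe_X_zpow (n : ℤ) : ((X ^ n : RatFunc K) : LaurentSeries K) = HahnSeries.single n 1 := by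
  rw [map_zpow₀, coe_X, ← single_zpow]

theorem X_zpow_eq_one_iff {n : ℤ} : (X : RatFunc K) ^ n = 1 ↔ n = 0 := by
  refine ⟨fun h => ?_, fun h => by rw [h, zpow_zero]⟩
  have hcoeff := congrArg (fun f : RatFunc K => (f : LaurentSeries K).coeff n) h
  by_contra hn
  simp only [coe_X_zpow, map_one, HahnSeries.coeff_single_same, HahnSeries.coeff_one, if_neg hn]
    at hcoeff
  exact one_ne_zero hcoeff

theorem eq_zero_of_X_zpow_zpow_eq_one {m : ℤ} (hm : m ≠ 0) (n : ℤ) (h : ((X : RatFunc K) ^ m) ^ n = 1) :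
    n = 0 := by
  rw [← zpow_mul, X_zpow_eq_one_iff] at h
  exact (mul_eq_zero.mp h).resolve_left hm

theorem X_zpow_sub_inv_ne_zero {m : ℤ} (hm : m ≠ 0) :
    (X : RatFunc K) ^ m - ((X : RatFunc K) ^ m)⁻¹ ≠ 0 := by
  have hX : (X : RatFunc K) ^ m ≠ 0 := zpow_ne_zero m X_ne_zero
  simpa using zpow_sub_zpow_neg_ne_zero hX (eq_zero_of_X_zpow_zpow_eq_one hm) one_ne_zero

theorem coeff_nonneg_of_mem_closure_X_zpow [LinearOrder K] [IsStrictOrderedRing K]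
    {f : RatFunc K} (hf : f ∈ AddSubmonoid.closure {g : RatFunc K | ∃ n : ℤ, g = X ^ n})
    (i : ℤ) : 0 ≤ (f : LaurentSeries K).coeff i := by
  induction hf using AddSubmonoid.closure_induction with
  | mem g hg =>
    obtain ⟨n, rfl⟩ := hg
    rw [coe_X_zpow, HahnSeries.coeff_single]
    split_ifs <;> norm_num
  | zero => simp
  | add g h _ _ hg hh =>
    rw [map_add, HahnSeries.coeff_add]
    exact add_nonneg hg hh

end RatFunc

theorem greedy_coeff_two_one_eq {F : Type*} [Field F] {w₂ w₃ : F} (hw₂₀ : w₂ ≠ 0)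
    (hw₂ : ∀ n : ℤ, w₂ ^ n = 1 → n = 0) (hw₃ : w₃ - w₃⁻¹ ≠ 0)
    (e : ℕ → ℕ → F) (h0 : e 0 0 = 1)
    (h1 : ∀ p q : ℕ, ¬(p = 0 ∧ q = 0) → 9 * q ≤ 8 * p →
      e p q = ∑ k ∈ Finset.Icc 1 p, (-1 : F) ^ (k - 1) * e (p - k) q *
        qbinom w₂ (max (4 - 3 * (q : ℤ)) 0 + k - 1) k)
    (h2 : ∀ p q : ℕ, ¬(p = 0 ∧ q = 0) → 8 * p ≤ 9 * q →
      e p q = ∑ l ∈ Finset.Icc 1 q, (-1 : F) ^ (l - 1) * e p (q - l) *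
        qbinom w₃ (max (3 - 2 * (p : ℤ)) 0 + l - 1) l) :
    e 2 1 = qint w₂ 4 - qint w₃ 3 := by
  have hw₂' : w₂ - w₂⁻¹ ≠ 0 := by
    simpa using zpow_sub_zpow_neg_ne_zero hw₂₀ hw₂ one_ne_zero
  have e10 : e 1 0 = qint w₂ 4 := by
    simpa [h0, qbinom_one hw₂'] using h1 1 0 (by simp) (by norm_num)
  have e01 : e 0 1 = qint w₃ 3 := by
    simpa [h0, qbinom_one hw₃] using h2 0 1 (by simp) (by norm_num)
  have e11 : e 1 1 = e 1 0 := by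
    simpa [qbinom_one hw₃, qint_one hw₃] using h2 1 1 (by simp) (by norm_num)
  have e21 := h1 2 1 (by simp) (by norm_num)
  rw [show Finset.Icc 1 2 = {1, 2} by rfl, Finset.sum_pair (by norm_num : (1 : ℕ) ≠ 2)] at e21
  have h22 : qbinom w₂ 2 2 = 1 := mod_cast qbinom_self hw₂₀ hw₂ 2
  norm_num [qbinom_one hw₂', qint_one hw₂', h22] at e21
  rw [e21, e11, e10, e01]
  ring

/-- for `(b,c) = (2,3)` and `(a₁,a₂) = (3,4)`, the quantum greedy
recurrence coefficient `e(2,1)` equals `v² - 1 + v⁻²`; in particular it is not a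
Laurent polynomial with nonnegative coefficients.  Here `v = RatFunc.X`, the
first branch applies when `c a₁ q ≤ b a₂ p` (i.e. `9 q ≤ 8 p`), the second when
`8 p ≤ 9 q`, and the binomial subscripts are `v^b = v²` and `v^c = v³`. -/
theorem quantum_greedy_not_positive_b2_c3
    (e : ℕ → ℕ → RatFunc ℚ)
    (h0 : e 0 0 = 1)
    (h1 : ∀ p q : ℕ, ¬(p = 0 ∧ q = 0) → 9 * q ≤ 8 * p →
      e p q = ∑ k ∈ Finset.Icc 1 p, (-1 : RatFunc ℚ) ^ (k - 1) * e (p - k) q *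
        qbinom ((RatFunc.X : RatFunc ℚ) ^ (2 : ℤ)) (max (4 - 3 * (q : ℤ)) 0 + k - 1) k)
    (h2 : ∀ p q : ℕ, ¬(p = 0 ∧ q = 0) → 8 * p ≤ 9 * q →
      e p q = ∑ l ∈ Finset.Icc 1 q, (-1 : RatFunc ℚ) ^ (l - 1) * e p (q - l) *
        qbinom ((RatFunc.X : RatFunc ℚ) ^ (3 : ℤ)) (max (3 - 2 * (p : ℤ)) 0 + l - 1) l) :
    e 2 1 = RatFunc.X ^ (2 : ℤ) - 1 + RatFunc.X ^ (-2 : ℤ) ∧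
    e 2 1 ∉ AddSubmonoid.closure {f : RatFunc ℚ | ∃ n : ℤ, f = RatFunc.X ^ n} := by
  have hval : e 2 1 = RatFunc.X ^ (2 : ℤ) - 1 + RatFunc.X ^ (-2 : ℤ) := by
    rw [greedy_coeff_two_one_eq (zpow_ne_zero 2 RatFunc.X_ne_zero)
      (RatFunc.eq_zero_of_X_zpow_zpow_eq_one two_ne_zero) (RatFunc.X_zpow_sub_inv_ne_zero three_ne_zero)
      e h0 h1 h2, qint_four (RatFunc.X_zpow_sub_inv_ne_zero two_ne_zero),
      qint_three (RatFunc.X_zpow_sub_inv_ne_zero three_ne_zero)]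
    simp only [← zpow_mul]
    norm_num
    ring
  refine ⟨hval, fun hmem => ?_⟩
  have hcoeff := RatFunc.coeff_nonneg_of_mem_closure_X_zpow hmem 0
  rw [hval] at hcoeff
  norm_num [HahnSeries.coeff_one] at hcoeff
end

section
/- For a_1 ≤ 0 < a_2, the greedy element x[a_1,a_2] equals x_1^{−a_1} x_2^{−a_2} (1 + x_1^b)^{a_2} = x_1^{−a_1} x_3^{a_2}; that is, e(p,q) = C(a_2, p) for q = 0 and e(p,q) = 0 for q > 0. -/
/-!
Since `a₁ ≤ 0 < a₂`, the condition `c a₁ q ≤ b a₂ p` holds at every `(p, q)`, so every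
coefficient obeys the first recurrence. For `q > 0` it expresses `e(p, q)` through
`e(p - k, q)` alone, with no initial value, so these coefficients vanish. For `q = 0` the
weights are `(-1)^(k-1) C(a₂ + k - 1, k) = -C(-a₂, k)`, and the recurrence is the coefficient
identity `(1 + t)^{a₂} (1 + t)^{-a₂} = 1`, i.e. Chu–Vandermonde for `C(a₂ - a₂, p)`; hence
`e(p, 0) = C(a₂, p)`, and the binomial theorem sums the greedy element.
-/

open Finset

theorem Ring.choose_neg_natCast_int (n k : ℕ) :
    Ring.choose (-(n : ℤ)) k = (-1) ^ k * ((n + k - 1).choose k : ℤ) := by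
  rcases k with _ | k
  · simp
  · rw [Ring.choose_neg, Units.smul_def, Int.coe_negOnePow_natCast, smul_eq_mul,
      show (n : ℤ) + (k + 1 : ℕ) - 1 = (n + k : ℕ) by push_cast; ring, Ring.choose_natCast,
      Nat.add_succ_sub_one]

theorem sum_antidiagonal_neg_one_pow_mul_choose (n p : ℕ) :
    ∑ ij ∈ antidiagonal p, (-1) ^ ij.1 * ((n + ij.1 - 1).choose ij.1 : ℤ) * (n.choose ij.2 : ℤ) =
      if p = 0 then 1 else 0 := by
  have h := Ring.add_choose_eq p (Commute.all (-(n : ℤ)) n)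
  simp only [neg_add_cancel, Ring.choose_zero_ite, Ring.choose_neg_natCast_int,
    Ring.choose_natCast] at h
  rw [h]

theorem sum_Icc_neg_one_pow_mul_choose_mul_choose (n : ℕ) {p : ℕ} (hp : 0 < p) :
    ∑ k ∈ Icc 1 p, (-1 : ℤ) ^ (k - 1) * (n.choose (p - k) : ℤ) * ((n + k - 1).choose k : ℤ) =
      n.choose p := by
  have h := sum_antidiagonal_neg_one_pow_mul_choose n p
  rw [Nat.sum_antidiagonal_eq_sum_range_succ
    (fun i j => (-1) ^ i * ((n + i - 1).choose i : ℤ) * (n.choose j : ℤ)), if_neg hp.ne',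
    sum_range_succ'] at h
  simp only [pow_zero, add_zero, Nat.choose_zero_right, Nat.sub_zero, Nat.cast_one, one_mul] at h
  rw [eq_neg_of_add_eq_zero_right h, ← sum_neg_distrib, ← Ico_add_one_right_eq_Icc,
    sum_Ico_eq_sum_range, Nat.add_sub_cancel]
  refine sum_congr rfl fun k _ => ?_
  rw [add_comm 1 k, Nat.add_sub_cancel, pow_succ]
  ring

theorem eq_choose_of_greedy_recurrence (n : ℕ) {f : ℕ → ℤ} (h0 : f 0 = 1)
    (hrec : ∀ p, 0 < p →
      f p = ∑ k ∈ Icc 1 p, (-1) ^ (k - 1) * f (p - k) * ((n + k - 1).choose k : ℤ))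
    (p : ℕ) : f p = n.choose p := by
  induction p using Nat.strong_induction_on with
  | _ p ih =>
    rcases Nat.eq_zero_or_pos p with rfl | hp
    · simpa using h0
    · rw [hrec p hp, ← sum_Icc_neg_one_pow_mul_choose_mul_choose n hp]
      refine sum_congr rfl fun k hk => ?_
      rw [ih (p - k) (by grind)]

theorem eq_zero_of_greedy_recurrence {f w : ℕ → ℤ}
    (hrec : ∀ p, f p = ∑ k ∈ Icc 1 p, (-1) ^ (k - 1) * f (p - k) * w k) (p : ℕ) : f p = 0 := by
  induction p using Nat.strong_induction_on with
  | _ p ih =>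
    rw [hrec p]
    refine sum_eq_zero fun k hk => ?_
    rw [ih (p - k) (by grind), mul_zero, zero_mul]

theorem sum_range_choose_mul_pow_of_le {R : Type*} [CommSemiring R] (x : R) {n N : ℕ}
    (h : n ≤ N) : ∑ p ∈ range (N + 1), (n.choose p : R) * x ^ p = (1 + x) ^ n := by
  rw [add_comm 1 x, add_pow, ← sum_subset (range_subset_range.mpr (Nat.succ_le_succ h))]
  · exact sum_congr rfl fun p _ => by rw [one_pow, mul_one, mul_comm]
  · intro p _ hp
    rw [Nat.choose_eq_zero_of_lt (by simpa using hp), Nat.cast_zero, zero_mul]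

theorem sum_sum_zpow_eq_of_coeff_eq_choose {F : Type*} [Field F] {x1 : F} (x2 : F)
    (hx1 : x1 ≠ 0) (b c : ℕ) (a1 a2 : ℤ) {n N : ℕ} (hN : n ≤ N) {e : ℕ → ℕ → ℤ}
    (he0 : ∀ p, e p 0 = n.choose p) (he : ∀ p q, 0 < q → e p q = 0) :
    ∑ p ∈ range (N + 1), ∑ q ∈ range (N + 1),
        (e p q : F) * x1 ^ ((b : ℤ) * p - a1) * x2 ^ ((c : ℤ) * q - a2) =
      x1 ^ (-a1) * x2 ^ (-a2) * (1 + x1 ^ b) ^ n := by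
  have hrow : ∀ p ∈ range (N + 1),
      ∑ q ∈ range (N + 1), (e p q : F) * x1 ^ ((b : ℤ) * p - a1) * x2 ^ ((c : ℤ) * q - a2) =
        x1 ^ (-a1) * x2 ^ (-a2) * ((n.choose p : F) * (x1 ^ b) ^ p) := by
    intro p _
    rw [sum_eq_single_of_mem 0 (by simp) fun q _ hq => by
      rw [he p q (Nat.pos_of_ne_zero hq), Int.cast_zero, zero_mul, zero_mul]]
    have hx : x1 ^ ((b : ℤ) * p - a1) = x1 ^ (-a1) * (x1 ^ b) ^ p := by
      rw [sub_eq_neg_add, zpow_add₀ hx1, ← pow_mul, ← zpow_natCast, Nat.cast_mul]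
    rw [he0, hx, Nat.cast_zero, mul_zero, zero_sub, Int.cast_natCast]
    ring
  rw [sum_congr rfl hrow, ← mul_sum, sum_range_choose_mul_pow_of_le _ hN]

theorem greedy_element_a1_nonpos_a2_pos_general
    (b c : ℕ) (a1 a2 : ℤ)
    (ha1 : a1 ≤ 0) (ha2 : 0 < a2)
    (e : ℕ → ℕ → ℤ)
    (h0 : e 0 0 = 1)
    (h1 : ∀ p q : ℕ, ¬(p = 0 ∧ q = 0) → (c : ℤ) * a1 * q ≤ (b : ℤ) * a2 * p →
      e p q = ∑ k ∈ Finset.Icc 1 p, (-1 : ℤ) ^ (k - 1) * e (p - k) q *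
        (((max (a2 - c * q) 0).toNat + k - 1).choose k : ℤ)) :
    (∀ p : ℕ, e p 0 = (a2.toNat.choose p : ℤ)) ∧
    (∀ p q : ℕ, 0 < q → e p q = 0) ∧
    (∀ (F : Type) [Field F] (x1 x2 : F), x1 ≠ 0 → x2 ≠ 0 →
      ∀ N : ℕ, a2.toNat ≤ N →
      ∑ p ∈ Finset.range (N + 1), ∑ q ∈ Finset.range (N + 1),
        (e p q : F) * x1 ^ ((b : ℤ) * p - a1) * x2 ^ ((c : ℤ) * q - a2) =
      x1 ^ (-a1) * x2 ^ (-a2) * (1 + x1 ^ b) ^ a2.toNat) := by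
  have hcond (p q : ℕ) : (c : ℤ) * a1 * q ≤ (b : ℤ) * a2 * p :=
    (mul_nonpos_of_nonpos_of_nonneg (mul_nonpos_of_nonneg_of_nonpos (by positivity) ha1)
      (by positivity)).trans (by positivity)
  have hcol0 : ∀ p : ℕ, e p 0 = (a2.toNat.choose p : ℤ) :=
    eq_choose_of_greedy_recurrence a2.toNat h0 fun p hp => by
      simpa [max_eq_left ha2.le] using h1 p 0 (by omega) (hcond p 0)
  have hcol : ∀ p q : ℕ, 0 < q → e p q = 0 := fun p q hq =>
    eq_zero_of_greedy_recurrence (fun p => h1 p q (by omega) (hcond p q)) p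
  exact ⟨hcol0, hcol, fun F _ x1 x2 hx1 _ N hN =>
    sum_sum_zpow_eq_of_coeff_eq_choose x2 hx1 b c a1 a2 hN hcol0 hcol⟩

/-- for `a₁ ≤ 0 < a₂`, the greedy coefficients are
`e(p,0) = C(a₂,p)` and `e(p,q) = 0` for `q > 0`, so the greedy element equals
`x₁^{-a₁} x₂^{-a₂} (1 + x₁^b)^{a₂}` (`= x₁^{-a₁} x₃^{a₂}`). -/
theorem greedy_element_a1_nonpos_a2_pos
    (b c : ℕ) (hb : 0 < b) (hc : 0 < c) (a1 a2 : ℤ)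
    (ha1 : a1 ≤ 0) (ha2 : 0 < a2)
    (e : ℕ → ℕ → ℤ)
    (h0 : e 0 0 = 1)
    (h1 : ∀ p q : ℕ, ¬(p = 0 ∧ q = 0) → (c : ℤ) * a1 * q ≤ (b : ℤ) * a2 * p →
      e p q = ∑ k ∈ Finset.Icc 1 p, (-1 : ℤ) ^ (k - 1) * e (p - k) q *
        (((max (a2 - c * q) 0).toNat + k - 1).choose k : ℤ))
    (h2 : ∀ p q : ℕ, ¬(p = 0 ∧ q = 0) → (b : ℤ) * a2 * p ≤ (c : ℤ) * a1 * q →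
      e p q = ∑ l ∈ Finset.Icc 1 q, (-1 : ℤ) ^ (l - 1) * e p (q - l) *
        (((max (a1 - b * p) 0).toNat + l - 1).choose l : ℤ)) :
    (∀ p : ℕ, e p 0 = (a2.toNat.choose p : ℤ)) ∧
    (∀ p q : ℕ, 0 < q → e p q = 0) ∧
    (∀ (F : Type) [Field F] (x1 x2 : F), x1 ≠ 0 → x2 ≠ 0 →
      ∀ N : ℕ, a2.toNat ≤ N →
      ∑ p ∈ Finset.range (N + 1), ∑ q ∈ Finset.range (N + 1),
        (e p q : F) * x1 ^ ((b : ℤ) * p - a1) * x2 ^ ((c : ℤ) * q - a2) =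
      x1 ^ (-a1) * x2 ^ (-a2) * (1 + x1 ^ b) ^ a2.toNat) :=
  greedy_element_a1_nonpos_a2_pos_general b c a1 a2 ha1 ha2 e h0 h1
end
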